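/- Let f satisfy condition (1.2) and assume t₀ ∈ (−∞, 0) is such that f(t) = 0 for every t ≤ t₀ and f(t) > 0 for every t > t₀. Suppose that for each λ < 0, u_λ is a classical solution of (P_f^λ) on Ω. Then for every compact set K ⊂ Ω there exist a constant C > 0 and λ̄ < 0 such that |λ f(u_λ(x))| ≤ C for all x ∈ K and all λ < λ̄. -/

import Mathlib

open Set MeasureTheory Filter Topology

/-- The Laplacian of `u` at `x`: the trace of the Hessian of `u`. -/
noncomputable def laplacian {N : ℕ} (u : EuclideanSpace ℝ (Fin N) → ℝ)
    (x : EuclideanSpace ℝ (Fin N)) : ℝ :=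
  ∑ i : Fin N, iteratedFDeriv ℝ 2 u x ![EuclideanSpace.single i 1, EuclideanSpace.single i 1]

/-- A classical solution of the problem `(P_f^λ)` on `Ω`:
`u` is continuous on the closure of `Ω`, twice continuously differentiable on `Ω`,
satisfies `-Δ u = λ f(u)` in `Ω` and `u = 0` on `∂ Ω`. -/
def IsClassicalSolution {N : ℕ} (Ω : Set (EuclideanSpace ℝ (Fin N))) (lam : ℝ)
    (f : ℝ → ℝ) (u : EuclideanSpace ℝ (Fin N) → ℝ) : Prop :=
  ContinuousOn u (closure Ω) ∧ ContDiffOn ℝ 2 u Ω ∧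
    (∀ x ∈ Ω, -laplacian u x = lam * f (u x)) ∧
    (∀ x ∈ frontier Ω, u x = 0)

/-- Condition (1.2): `f` is continuous, non-decreasing, non-negative and `f 0 > 0`. -/
def Cond12 (f : ℝ → ℝ) : Prop :=
  Continuous f ∧ Monotone f ∧ (∀ t, 0 ≤ f t) ∧ 0 < f 0

/-!
For `λ < 0` the solution `u = u_λ` is subharmonic, so `u ≤ 0` by the maximum principle, and it is
harmonic on `{u < t₀}`, so `u ≥ t₀`. Fix `x` with `B(x, r) ⊆ Ω` and `δ > 0`. Where `u > u(x) - δ`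
we have `Δu ≥ c := -λ f(u(x) - δ) ≥ 0`, so `u - c ‖· - x‖² / (2N)` is subharmonic on that part of
the ball; comparing its value at `x` with its boundary values gives `c r² ≤ 2N (-u(x)) ≤ -2N t₀`.
Letting `δ → 0` bounds `|λ f(u(x))|` by `2N |t₀| / r²`, uniformly in `λ < 0`.
-/

open InnerProductSpace Module Metric
open scoped Laplacian

theorem IsLocalMax.deriv_deriv_nonpos {g : ℝ → ℝ} {a : ℝ} (h : IsLocalMax g a)
    (hc : ContinuousAt g a) : deriv (deriv g) a ≤ 0 := by
  by_contra! hpos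
  have hmin := isLocalMin_of_deriv_deriv_pos hpos h.deriv_eq_zero hc
  have hconst : g =ᶠ[𝓝 a] fun _ => g a := (hmin.and h).mono fun t ht => le_antisymm ht.2 ht.1
  have hderiv : deriv g =ᶠ[𝓝 a] fun _ => 0 := by simpa using hconst.deriv
  rw [hderiv.deriv_eq, deriv_const] at hpos
  exact hpos.false

section

variable {E : Type*} [NormedAddCommGroup E] [NormedSpace ℝ E]

theorem IsLocalMax.iteratedFDeriv_two_nonpos {u : E → ℝ} {z : E} (h : IsLocalMax u z)
    (hu : ContDiffAt ℝ 2 u z) (v : E) : iteratedFDeriv ℝ 2 u z ![v, v] ≤ 0 := by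
  let line : ℝ → E := fun t => z + t • v
  have hline : ∀ t, HasDerivAt line v t := fun t =>
    (((hasDerivAt_id t).smul_const v).const_add z).congr_deriv (one_smul ℝ v)
  have hline0 : line 0 = z := by simp [line]
  have htendsto : Tendsto line (𝓝 0) (𝓝 z) := hline0 ▸ (hline 0).continuousAt
  have hdiff : ∀ᶠ t in 𝓝 (0 : ℝ), DifferentiableAt ℝ u (line t) :=
    htendsto.eventually ((hu.eventually (by simp)).mono fun y hy => hy.differentiableAt (by simp))
  have hderiv : deriv (u ∘ line) =ᶠ[𝓝 0] fun t => fderiv ℝ u (line t) v := by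
    filter_upwards [hdiff] with t ht
    exact (ht.hasFDerivAt.comp_hasDerivAt t (hline t)).deriv
  have hderiv2 : HasDerivAt (fun t => fderiv ℝ u (line t) v) (fderiv ℝ (fderiv ℝ u) z v v) 0 := by
    have hdd : DifferentiableAt ℝ (fderiv ℝ u) z :=
      (hu.fderiv_right (m := 1) (by norm_num)).differentiableAt (by norm_num)
    exact (hdd.hasFDerivAt.comp_hasDerivAt_of_eq (x := 0) (hline 0) hline0.symm).clm_apply
      (hasDerivAt_const 0 v) |>.congr_deriv (by simp)
  have hmax : IsLocalMax (u ∘ line) 0 := (hline0 ▸ h).comp_continuous (hline 0).continuousAt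
  have := hmax.deriv_deriv_nonpos (hu.continuousAt.comp_of_eq (hline 0).continuousAt hline0)
  rw [hderiv.deriv_eq, hderiv2.deriv] at this
  simpa [iteratedFDeriv_two_apply] using this

end

section

variable {E : Type*} [NormedAddCommGroup E] [InnerProductSpace ℝ E]

theorem contDiff_norm_sub_sq (x : E) : ContDiff ℝ 2 (fun y => ‖y - x‖ ^ 2) :=
  (contDiff_norm_sq ℝ).comp (contDiff_id.sub contDiff_const)

variable [FiniteDimensional ℝ E]

theorem laplacian_norm_sub_sq (x z : E) :
    Δ (fun y => ‖y - x‖ ^ 2) z = 2 * finrank ℝ E := by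
  have hfd : fderiv ℝ (fun y => ‖y - x‖ ^ 2) = fun y => 2 • innerSL ℝ (y - x) := by
    ext1 y
    rw [fderiv_comp_sub x (f := fun y : E => ‖y‖ ^ 2), fderiv_norm_sq_apply]
  have hfd2 : HasFDerivAt (fun y => 2 • innerSL ℝ (y - x)) (2 • innerSL ℝ) z :=
    ((innerSL ℝ).hasFDerivAt.comp z ((hasFDerivAt_id z).sub_const x)).const_smul 2
  rw [laplacian_eq_iteratedFDeriv_stdOrthonormalBasis]
  simp only [iteratedFDeriv_two_apply, hfd, hfd2.fderiv]
  have hb : ∀ i, innerSL ℝ (stdOrthonormalBasis ℝ E i) (stdOrthonormalBasis ℝ E i) = 1 :=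
    fun i => by
      rw [innerSL_apply_apply, real_inner_self_eq_norm_sq, OrthonormalBasis.norm_eq_one, one_pow]
  simp [hb, mul_comm]

theorem IsLocalMax.laplacian_nonpos {u : E → ℝ} {z : E} (h : IsLocalMax u z)
    (hu : ContDiffAt ℝ 2 u z) : Δ u z ≤ 0 := by
  rw [laplacian_eq_iteratedFDeriv_stdOrthonormalBasis]
  exact Finset.sum_nonpos fun i _ => h.iteratedFDeriv_two_nonpos hu _

theorem laplacian_add_mul_norm_sub_sq {v : E → ℝ} {y : E} (hv : ContDiffAt ℝ 2 v y) (a : ℝ)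
    (x : E) : Δ (v + fun y => a * ‖y - x‖ ^ 2) y = Δ v y + a * (2 * finrank ℝ E) := by
  have hq : ContDiffAt ℝ 2 (a • fun y => ‖y - x‖ ^ 2) y :=
    ((contDiff_norm_sub_sq x).const_smul a).contDiffAt
  change Δ (v + a • fun y => ‖y - x‖ ^ 2) y = _
  rw [hv.laplacian_add hq,
    laplacian_smul a (contDiff_norm_sub_sq x).contDiffAt, laplacian_norm_sub_sq, smul_eq_mul]

variable {V : Set E} {v : E → ℝ}

theorem exists_mem_frontier_le_of_laplacian_pos (hVo : IsOpen V) (hVb : Bornology.IsBounded V)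
    (hvc : ContinuousOn v (closure V)) (hvd : ContDiffOn ℝ 2 v V)
    (hΔ : ∀ y ∈ V, 0 < Δ v y) {x : E} (hx : x ∈ V) : ∃ z ∈ frontier V, v x ≤ v z := by
  obtain ⟨z, hzc, hzmax⟩ :=
    hVb.isCompact_closure.exists_isMaxOn ⟨x, subset_closure hx⟩ hvc
  refine ⟨z, hVo.frontier_eq ▸ ⟨hzc, fun hzV => ?_⟩, hzmax (subset_closure hx)⟩
  have hloc : IsLocalMax v z :=
    Filter.mem_of_superset (hVo.mem_nhds hzV) fun y hy => hzmax (subset_closure hy)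
  exact (hloc.laplacian_nonpos (hvd.contDiffAt (hVo.mem_nhds hzV))).not_gt (hΔ z hzV)

theorem le_of_laplacian_nonneg_of_frontier_le [Nontrivial E] (hVo : IsOpen V)
    (hVb : Bornology.IsBounded V) (hvc : ContinuousOn v (closure V)) (hvd : ContDiffOn ℝ 2 v V)
    (hΔ : ∀ y ∈ V, 0 ≤ Δ v y) {M : ℝ} (hM : ∀ z ∈ frontier V, v z ≤ M) {x : E} (hx : x ∈ V) :
    v x ≤ M := by
  obtain ⟨R, hR⟩ := (isBounded_iff_subset_closedBall x).1 hVb.closure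
  refine le_of_forall_pos_le_add fun ε hε => ?_
  set a := ε / (R ^ 2 + 1)
  have hq : ContDiff ℝ 2 (fun y => a * ‖y - x‖ ^ 2) := contDiff_const.mul (contDiff_norm_sub_sq x)
  obtain ⟨z, hz, hxz⟩ := exists_mem_frontier_le_of_laplacian_pos hVo hVb
    (hvc.add hq.continuous.continuousOn) (hvd.add hq.contDiffOn) (fun y hy => by
      rw [laplacian_add_mul_norm_sub_sq (hvd.contDiffAt (hVo.mem_nhds hy))]
      have := finrank_pos (R := ℝ) (M := E)
      have := hΔ y hy
      positivity) hx
  have hzR : ‖z - x‖ ≤ R := mem_closedBall_iff_norm.1 (hR (frontier_subset_closure hz))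
  have : a * ‖z - x‖ ^ 2 ≤ ε := calc
    a * ‖z - x‖ ^ 2 ≤ a * (R ^ 2 + 1) := by gcongr; nlinarith [norm_nonneg (z - x)]
    _ = ε := div_mul_cancel₀ _ (by positivity)
  simp only [Pi.add_apply, sub_self, norm_zero] at hxz
  linarith [hM z hz]

theorem mul_sq_le_of_le_laplacian_of_lt [Nontrivial E] {u : E → ℝ} {x : E} {r c δ M : ℝ}
    (hr : 0 < r) (hc : 0 ≤ c) (hδ : 0 < δ) (huc : ContinuousOn u (closedBall x r))
    (hud : ContDiffOn ℝ 2 u (ball x r)) (hΔ : ∀ y ∈ ball x r, u x - δ < u y → c ≤ Δ u y)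
    (hM : ∀ y ∈ sphere x r, u y ≤ M) : c * r ^ 2 ≤ 2 * finrank ℝ E * (M - u x) := by
  set n : ℝ := (finrank ℝ E : ℝ)
  have hn : 0 < n := Nat.cast_pos.2 finrank_pos
  set a := c / (2 * n)
  have hac : a * (2 * n) = c := div_mul_cancel₀ c (by positivity)
  set U := ball x r ∩ u ⁻¹' Ioi (u x - δ)
  have hUo : IsOpen U := hud.continuousOn.isOpen_inter_preimage isOpen_ball isOpen_Ioi
  have hclU : closure U ⊆ closedBall x r :=
    (closure_mono inter_subset_left).trans closure_ball_subset_closedBall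
  have hq : ContDiff ℝ 2 (fun y => -a * ‖y - x‖ ^ 2) := contDiff_const.mul (contDiff_norm_sub_sq x)
  have hfrontier : ∀ z ∈ frontier U, u z + -a * ‖z - x‖ ^ 2 ≤ max (M - a * r ^ 2) (u x - δ) := by
    intro z hz
    rw [hUo.frontier_eq] at hz
    have ha : 0 ≤ a * ‖z - x‖ ^ 2 := by positivity
    rcases (mem_closedBall_iff_norm.1 (hclU hz.1)).lt_or_eq with hlt | heq
    · have : u z ≤ u x - δ := not_lt.1 fun h => hz.2 ⟨mem_ball_iff_norm.2 hlt, h⟩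
      exact le_max_of_le_right (by linarith)
    · have := hM z (mem_sphere_iff_norm.2 heq)
      rw [heq]
      exact le_max_of_le_left (by linarith)
  have hx := le_of_laplacian_nonneg_of_frontier_le hUo (isBounded_ball.subset inter_subset_left)
    ((huc.mono hclU).add hq.continuous.continuousOn)
    ((hud.mono inter_subset_left).add hq.contDiffOn)
    (fun y hy => by
      rw [laplacian_add_mul_norm_sub_sq (hud.contDiffAt (isOpen_ball.mem_nhds hy.1))]
      linarith [hΔ y hy.1 hy.2]) hfrontier ⟨mem_ball_self hr, by simpa using hδ⟩
  simp only [Pi.add_apply, sub_self, norm_zero] at hx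
  have := (le_max_iff.1 hx).resolve_right (by linarith)
  nlinarith

theorem mul_sq_le_of_le_laplacian [Nontrivial E] {u : E → ℝ} {g : ℝ → ℝ} {x : E} {r M : ℝ}
    (hr : 0 < r) (hg : Monotone g) (hg0 : ∀ t, 0 ≤ g t) (hgc : ContinuousAt g (u x))
    (huc : ContinuousOn u (closedBall x r)) (hud : ContDiffOn ℝ 2 u (ball x r))
    (hΔ : ∀ y ∈ ball x r, g (u y) ≤ Δ u y) (hM : ∀ y ∈ sphere x r, u y ≤ M) :
    g (u x) * r ^ 2 ≤ 2 * finrank ℝ E * (M - u x) := by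
  have hshift : Tendsto (fun δ : ℝ => u x - δ) (𝓝[>] 0) (𝓝 (u x)) :=
    ((continuous_const.sub continuous_id).tendsto' 0 (u x) (sub_zero _)).mono_left
      nhdsWithin_le_nhds
  refine le_of_tendsto ((hgc.tendsto.comp hshift).mul_const (r ^ 2))
    (eventually_nhdsWithin_of_forall fun δ (hδ : 0 < δ) => ?_)
  exact mul_sq_le_of_le_laplacian_of_lt hr (hg0 _) hδ huc hud
    (fun y hy hlt => (hg hlt.le).trans (hΔ y hy)) hM

end

theorem laplacian_eq_laplacian {N : ℕ} (u : EuclideanSpace ℝ (Fin N) → ℝ) : laplacian u = Δ u := by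
  rw [laplacian_eq_iteratedFDeriv_orthonormalBasis u (EuclideanSpace.basisFun (Fin N) ℝ)]
  ext x
  simp [laplacian]

namespace IsClassicalSolution

variable {N : ℕ} {Ω : Set (EuclideanSpace ℝ (Fin N))} {lam : ℝ} {f : ℝ → ℝ}
  {u : EuclideanSpace ℝ (Fin N) → ℝ}

theorem laplacian_eq (h : IsClassicalSolution Ω lam f u) {y : EuclideanSpace ℝ (Fin N)}
    (hy : y ∈ Ω) : Δ u y = -lam * f (u y) := by
  rw [← laplacian_eq_laplacian, neg_mul, ← h.2.2.1 y hy, neg_neg]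

theorem nonpos [NeZero N] (h : IsClassicalSolution Ω lam f u) (hΩo : IsOpen Ω)
    (hΩb : Bornology.IsBounded Ω) (hlam : lam ≤ 0) (hf : ∀ t, 0 ≤ f t)
    {x : EuclideanSpace ℝ (Fin N)} (hx : x ∈ Ω) : u x ≤ 0 :=
  le_of_laplacian_nonneg_of_frontier_le hΩo hΩb h.1 h.2.1
    (fun _ hy => h.laplacian_eq hy ▸ mul_nonneg (neg_nonneg.2 hlam) (hf _))
    (fun z hz => (h.2.2.2 z hz).le) hx

theorem le_of_eq_zero_below [NeZero N] (h : IsClassicalSolution Ω lam f u) (hΩo : IsOpen Ω)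
    (hΩb : Bornology.IsBounded Ω) {t₀ : ℝ} (ht₀ : t₀ ≤ 0) (hf0 : ∀ t ≤ t₀, f t = 0)
    {x : EuclideanSpace ℝ (Fin N)} (hx : x ∈ Ω) : t₀ ≤ u x := by
  by_contra! hlt
  set V := Ω ∩ u ⁻¹' Iio t₀
  have hVo : IsOpen V := h.2.1.continuousOn.isOpen_inter_preimage hΩo isOpen_Iio
  have hclV : closure V ⊆ closure Ω := closure_mono inter_subset_left
  have hfrontier : ∀ z ∈ frontier V, -u z ≤ -t₀ := by
    intro z hz
    rw [hVo.frontier_eq] at hz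
    by_cases hzΩ : z ∈ Ω
    · exact neg_le_neg (not_lt.1 fun h' => hz.2 ⟨hzΩ, h'⟩)
    · rw [h.2.2.2 z (hΩo.frontier_eq ▸ ⟨hclV hz.1, hzΩ⟩)]
      linarith
  have := le_of_laplacian_nonneg_of_frontier_le (v := -u) hVo (hΩb.subset inter_subset_left)
    (h.1.mono hclV).neg (h.2.1.mono inter_subset_left).neg
    (fun y hy => by rw [laplacian_neg, Pi.neg_apply, h.laplacian_eq hy.1, hf0 _ hy.2.le]; simp)
    hfrontier ⟨hx, hlt⟩
  exact (neg_le_neg_iff.1 this).not_gt hlt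

theorem neg_mul_mul_sq_le [NeZero N] (h : IsClassicalSolution Ω lam f u) (hΩo : IsOpen Ω)
    (hΩb : Bornology.IsBounded Ω) (hlam : lam ≤ 0) (hfc : Continuous f) (hfm : Monotone f)
    (hf : ∀ t, 0 ≤ f t) {x : EuclideanSpace ℝ (Fin N)} {r : ℝ} (hr : 0 < r)
    (hball : closedBall x r ⊆ Ω) : -lam * f (u x) * r ^ 2 ≤ 2 * N * -u x := by
  have hbound := mul_sq_le_of_le_laplacian (g := fun t => -lam * f t) (M := 0) hr
    (hfm.const_mul (neg_nonneg.2 hlam)) (fun t => mul_nonneg (neg_nonneg.2 hlam) (hf t))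
    (continuous_const.mul hfc).continuousAt (h.1.mono (hball.trans subset_closure))
    (h.2.1.mono (ball_subset_closedBall.trans hball))
    (fun y hy => (h.laplacian_eq (hball (ball_subset_closedBall hy))).ge)
    (fun y hy => h.nonpos hΩo hΩb hlam hf (hball (sphere_subset_closedBall hy)))
  simpa [finrank_euclideanSpace_fin] using hbound

end IsClassicalSolution

theorem stmt_6_general {N : ℕ} (hN : 2 ≤ N) (Ω : Set (EuclideanSpace ℝ (Fin N)))
    (hΩo : IsOpen Ω) (hΩb : Bornology.IsBounded Ω)
    (f : ℝ → ℝ) (hf : Cond12 f)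
    (t₀ : ℝ) (ht₀ : t₀ < 0) (hf0 : ∀ t ≤ t₀, f t = 0)
    (u : ℝ → EuclideanSpace ℝ (Fin N) → ℝ)
    (hu : ∀ lam < (0:ℝ), IsClassicalSolution Ω lam f (u lam)) :
    ∀ K ⊆ Ω, IsCompact K → ∃ C > (0:ℝ), ∃ lb < (0:ℝ), ∀ lam < lb, ∀ x ∈ K,
      |lam * f (u lam x)| ≤ C := by
  obtain ⟨hfc, hfm, hfnn, -⟩ := hf
  have : NeZero N := ⟨by omega⟩
  intro K hKΩ hK
  obtain ⟨r, hr, hrΩ⟩ := hK.exists_cthickening_subset_open hΩo hKΩ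
  refine ⟨2 * N * -t₀ / r ^ 2, ?_, -1, by norm_num, fun lam hlam x hx => ?_⟩
  · have : (0 : ℝ) < N := by exact_mod_cast NeZero.pos N
    have : 0 < -t₀ := by linarith
    positivity
  have hlam0 : lam < 0 := by linarith
  have hball : closedBall x r ⊆ Ω := (closedBall_subset_cthickening hx r).trans hrΩ
  have hsol := hu lam hlam0
  have hest := hsol.neg_mul_mul_sq_le hΩo hΩb hlam0.le hfc hfm hfnn hr hball
  have hlow := hsol.le_of_eq_zero_below hΩo hΩb ht₀.le hf0 (hball (mem_closedBall_self hr.le))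
  rw [abs_of_nonpos (mul_nonpos_of_nonpos_of_nonneg hlam0.le (hfnn _)), le_div_iff₀ (by positivity)]
  nlinarith

/-- Local uniform bound (2.3): for every compact `K ⊂ Ω` there are `C > 0` and `λ̄ < 0`
with `|λ f(u_λ)| ≤ C` on `K` for all `λ < λ̄`. -/
theorem stmt_6 {N : ℕ} (hN : 2 ≤ N) (Ω : Set (EuclideanSpace ℝ (Fin N)))
    (hΩo : IsOpen Ω) (hΩb : Bornology.IsBounded Ω) (hΩne : Ω.Nonempty)
    (f : ℝ → ℝ) (hf : Cond12 f)
    (t₀ : ℝ) (ht₀ : t₀ < 0) (hf0 : ∀ t ≤ t₀, f t = 0) (hfpos : ∀ t, t₀ < t → 0 < f t)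
    (u : ℝ → EuclideanSpace ℝ (Fin N) → ℝ)
    (hu : ∀ lam < (0:ℝ), IsClassicalSolution Ω lam f (u lam)) :
    ∀ K ⊆ Ω, IsCompact K → ∃ C > (0:ℝ), ∃ lb < (0:ℝ), ∀ lam < lb, ∀ x ∈ K,
      |lam * f (u lam x)| ≤ C :=
  stmt_6_general hN Ω hΩo hΩb f hf t₀ ht₀ hf0 u hu
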